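/- Let G be an LCA group, Γ its dual, H a closed subgroup of G whose annihilator Λ is countable, μ a regular finite non-negative Borel measure on Γ, and α ∈ (0,∞). Then P(H) is dense in L^α(μ) if and only if μ is concentrated on a transversal. -/

import Mathlib

open MeasureTheory Set

noncomputable section

variable {G : Type*} [CommGroup G] [TopologicalSpace G] [IsTopologicalGroup G]
  [LocallyCompactSpace G] [T2Space G]

/-- The annihilator of a subgroup `H ≤ G` in the Pontryagin dual of `G`:
all characters that are trivial on `H`. -/
def annihilator (H : Subgroup G) : Subgroup (PontryaginDual G) where
  carrier := {γ : PontryaginDual G | ∀ y ∈ H, γ y = 1}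
  mul_mem' := fun {a b} ha hb y hy => by
    show a y * b y = 1
    rw [ha y hy, hb y hy, one_mul]
  one_mem' := fun y hy => rfl
  inv_mem' := fun {a} ha y hy => by
    show (a y)⁻¹ = 1
    rw [ha y hy, inv_one]

/-- The trigonometric `H`-polynomials on the dual group: finite sums
`γ ↦ Σ aₖ ⟨γ, yₖ⟩` with `aₖ ∈ ℂ`, `yₖ ∈ H`. -/
def trigPoly (H : Subgroup G) : Set (PontryaginDual G → ℂ) :=
  {p | ∃ (n : ℕ) (a : Fin n → ℂ) (y : Fin n → G), (∀ i, y i ∈ H) ∧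
    p = fun γ => ∑ i, a i * ((γ (y i) : Circle) : ℂ)}

/-- A finite non-negative Borel measure is *regular* (in the sense of the paper). -/
def PaperRegular {X : Type*} [TopologicalSpace X] [MeasurableSpace X]
    (μ : Measure X) : Prop :=
  ∀ B : Set X, MeasurableSet B → ∀ ε : ENNReal, 0 < ε →
    ∃ C U : Set X, IsCompact C ∧ IsOpen U ∧ C ⊆ B ∧ B ⊆ U ∧ μ (U \ C) < ε

/-- μ is concentrated on a transversal for Λ. -/
def ConcOnTransversal {Γ : Type*} [CommGroup Γ] [TopologicalSpace Γ] [MeasurableSpace Γ]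
    (Λ : Subgroup Γ) (μ : Measure Γ) : Prop :=
  ∃ D : Set Γ, MeasurableSet D ∧ μ Dᶜ = 0 ∧
    ∀ l ∈ Λ, l ≠ (1 : Γ) → D ∩ ((fun t => l * t) '' D) = ∅

/-- A family `F` of functions is dense in `L^α(μ)`. -/
def DenseInLp {X : Type*} [MeasurableSpace X] (μ : Measure X) (α : ℝ)
    (F : Set (X → ℂ)) : Prop :=
  ∀ g : X → ℂ, Measurable g → (∫⁻ x, (‖g x‖₊ : ENNReal) ^ α ∂μ) < ⊤ →
    ∀ ε : ENNReal, 0 < ε → ∃ p ∈ F, (∫⁻ x, (‖g x - p x‖₊ : ENNReal) ^ α ∂μ) < ε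

/-- A measure is discrete if it vanishes off a countable set. -/
def IsDiscreteMeasure {X : Type*} [MeasurableSpace X] (μ : Measure X) : Prop :=
  ∃ S : Set X, S.Countable ∧ μ Sᶜ = 0

/-!
Restricting characters to `H` is a continuous map from `Γ` into the compact space `H → Circle`
whose fibres are the cosets of `Λ`, and the trigonometric `H`-polynomials are the pullbacks of
the polynomials in the coordinates, which are uniformly dense by Stone–Weierstrass. If `μ`
lives on a transversal `D`, the map is injective on `D`, so Urysohn's lemma applied to the
images of compact pieces of `B ∩ D` and `Bᶜ ∩ D` approximates every indicator `1_B`, hence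
every function of `L^α(μ)`.

Conversely, trigonometric `H`-polynomials are `Λ`-invariant. If `μ` and its translate by some
`λ ≠ 0` in `Λ` had a nonzero common minorant `ω`, an open `V` with `ω V > 0` disjoint from
its translate would make `1_V` impossible to approximate. Hence `μ` is singular to all its
translates by `Λ`, and intersecting the countably many resulting conull sets gives the
transversal.
-/

open scoped Pointwise ENNReal

section TrigPoly

variable {G : Type*} [CommGroup G] [TopologicalSpace G] {H : Subgroup G}

def dualChar (y : G) : PontryaginDual G → ℂ := fun γ => γ y

lemma continuous_apply_dual (y : G) : Continuous fun γ : PontryaginDual G => γ y :=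
  continuous_eval_const (F := G →ₜ* Circle) y

lemma dualChar_mul (y z : G) : dualChar y * dualChar z = dualChar (y * z) := by
  funext γ
  simp [dualChar, map_mul]

lemma trigPoly_eq_span (H : Subgroup G) :
    trigPoly H = Submodule.span ℂ (dualChar '' (H : Set G)) := by
  ext p
  rw [SetLike.mem_coe, Submodule.mem_span_set']
  constructor
  · rintro ⟨n, a, y, hy, rfl⟩
    refine ⟨n, a, fun i => ⟨dualChar (y i), y i, hy i, rfl⟩, ?_⟩
    funext γ
    simp [dualChar, Finset.sum_apply]
  · rintro ⟨n, a, f, rfl⟩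
    choose y hyH hyf using fun i => (f i).2
    refine ⟨n, a, y, hyH, ?_⟩
    funext γ
    simp [Finset.sum_apply, ← hyf, dualChar]

lemma dualChar_mem_trigPoly {y : G} (hy : y ∈ H) : dualChar y ∈ trigPoly H := by
  rw [trigPoly_eq_span]
  exact Submodule.subset_span ⟨y, hy, rfl⟩

lemma add_mem_trigPoly {p q : PontryaginDual G → ℂ} (hp : p ∈ trigPoly H)
    (hq : q ∈ trigPoly H) : p + q ∈ trigPoly H := by
  rw [trigPoly_eq_span] at *
  exact add_mem hp hq

lemma mul_mem_trigPoly {p q : PontryaginDual G → ℂ} (hp : p ∈ trigPoly H)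
    (hq : q ∈ trigPoly H) : p * q ∈ trigPoly H := by
  rw [trigPoly_eq_span] at *
  have hmul : dualChar '' (H : Set G) * dualChar '' (H : Set G) ⊆ dualChar '' (H : Set G) := by
    rintro _ ⟨_, ⟨y, hy, rfl⟩, _, ⟨z, hz, rfl⟩, rfl⟩
    exact ⟨y * z, mul_mem hy hz, (dualChar_mul y z).symm⟩
  have hpq := Submodule.mul_mem_mul hp hq
  rw [Submodule.span_mul_span] at hpq
  exact Submodule.span_mono hmul hpq

lemma const_mem_trigPoly (c : ℂ) : (fun _ => c) ∈ trigPoly H :=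
  ⟨1, fun _ => c, fun _ => 1, fun _ => one_mem H, by funext; simp⟩

lemma star_mem_trigPoly {p : PontryaginDual G → ℂ} (hp : p ∈ trigPoly H) :
    star p ∈ trigPoly H := by
  obtain ⟨n, a, y, hy, rfl⟩ := hp
  refine ⟨n, star a, fun i => (y i)⁻¹, fun i => inv_mem (hy i), ?_⟩
  funext γ
  simp [map_inv, ← Circle.coe_inv_eq_conj, mul_comm]

lemma continuous_of_mem_trigPoly {p : PontryaginDual G → ℂ} (hp : p ∈ trigPoly H) :
    Continuous p := by
  obtain ⟨n, a, y, -, rfl⟩ := hp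
  exact continuous_finsetSum _ fun i _ =>
    continuous_const.mul (continuous_subtype_val.comp (continuous_apply_dual (y i)))

lemma apply_mul_of_mem_trigPoly {p : PontryaginDual G → ℂ} (hp : p ∈ trigPoly H)
    {l : PontryaginDual G} (hl : l ∈ annihilator H) (γ : PontryaginDual G) :
    p (l * γ) = p γ := by
  obtain ⟨n, a, y, hy, rfl⟩ := hp
  refine Finset.sum_congr rfl fun i _ => ?_
  have hlγ : (l * γ) (y i) = l (y i) * γ (y i) := rfl
  rw [hlγ, hl (y i) (hy i), one_mul]

end TrigPoly

section StoneWeierstrass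

variable {G : Type*} [CommGroup G] [TopologicalSpace G]

/-- The target is the compact space of all maps `H → Circle` rather than the dual of `H`,
so that Stone–Weierstrass applies. -/
def restrictDual (H : Subgroup G) : C(PontryaginDual G, H → Circle) :=
  ⟨fun γ y => γ y, continuous_pi fun y => continuous_apply_dual (y : G)⟩

def trigPolyPullback (H : Subgroup G) : StarSubalgebra ℂ C(H → Circle, ℂ) where
  carrier := {q | ⇑q ∘ restrictDual H ∈ trigPoly H}
  mul_mem' := mul_mem_trigPoly
  add_mem' := add_mem_trigPoly
  algebraMap_mem' c := const_mem_trigPoly c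
  star_mem' := star_mem_trigPoly

lemma dense_trigPolyPullback (H : Subgroup G) :
    Dense (trigPolyPullback H : Set C(H → Circle, ℂ)) := by
  set coord : H → C(H → Circle, ℂ) := fun y =>
    ⟨fun x => x y, continuous_subtype_val.comp (continuous_apply y)⟩
  set A := StarAlgebra.adjoin ℂ (Set.range coord)
  have hA : A ≤ trigPolyPullback H := StarAlgebra.adjoin_le (by
    rintro _ ⟨y, rfl⟩
    exact dualChar_mem_trigPoly y.2)
  have hsep : A.SeparatesPoints := by
    intro x x' hxx'
    obtain ⟨y, hy⟩ := Function.ne_iff.1 hxx'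
    exact ⟨coord y, ⟨coord y, StarAlgebra.subset_adjoin ℂ _ ⟨y, rfl⟩, rfl⟩,
      fun h => hy (Subtype.ext h)⟩
  have hdense : Dense (A : Set C(H → Circle, ℂ)) := by
    rw [dense_iff_closure_eq, ← StarSubalgebra.topologicalClosure_coe,
      ContinuousMap.starSubalgebra_topologicalClosure_eq_top_of_separatesPoints A hsep]
    rfl
  exact hdense.mono hA

end StoneWeierstrass

section Lp

variable {X : Type*} [MeasurableSpace X] {μ : Measure X}

lemma lintegral_nnnorm_rpow_eq_eLpNorm_rpow {α : ℝ} (hα : 0 < α) (g : X → ℂ) :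
    ∫⁻ x, (‖g x‖₊ : ℝ≥0∞) ^ α ∂μ = eLpNorm g (ENNReal.ofReal α) μ ^ α := by
  rw [eLpNorm_eq_lintegral_rpow_enorm_toReal (by simpa using hα) ENNReal.ofReal_ne_top,
    ENNReal.toReal_ofReal hα.le, one_div, ENNReal.rpow_inv_rpow hα.ne']
  rfl

lemma denseInLp_iff_eLpNorm {α : ℝ} (hα : 0 < α) {F : Set (X → ℂ)} :
    DenseInLp μ α F ↔ ∀ g : X → ℂ, Measurable g → eLpNorm g (ENNReal.ofReal α) μ < ∞ →
      ∀ ε : ℝ≥0∞, 0 < ε → ∃ f ∈ F, eLpNorm (g - f) (ENNReal.ofReal α) μ < ε := by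
  have hsub (g f : X → ℂ) : (fun x => g x - f x) = g - f := rfl
  simp only [DenseInLp, lintegral_nnnorm_rpow_eq_eLpNorm_rpow hα, hsub,
    ENNReal.rpow_lt_top_iff_of_pos hα]
  refine forall₃_congr fun g _ _ => ⟨fun h ε hε => ?_, fun h ε hε => ?_⟩
  · obtain ⟨f, hf, hlt⟩ := h (ε ^ α) (ENNReal.rpow_pos_of_nonneg hε hα.le)
    exact ⟨f, hf, (ENNReal.rpow_lt_rpow_iff hα).1 hlt⟩
  · obtain ⟨f, hf, hlt⟩ := h (ε ^ α⁻¹) (ENNReal.rpow_pos_of_nonneg hε (inv_nonneg.2 hα.le))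
    refine ⟨f, hf, ?_⟩
    simpa [ENNReal.rpow_inv_rpow hα.ne'] using ENNReal.rpow_lt_rpow hlt hα

end Lp

lemma exists_pos_mul_rpow_lt {a ε : ℝ≥0∞} (ha : a ≠ ∞) {r : ℝ} (hr : 0 < r) (hε : 0 < ε) :
    ∃ δ > 0, a * δ ^ r < ε := by
  obtain ⟨c, hc, hca⟩ := ENNReal.exists_pos_mul_lt ha hε.ne'
  refine ⟨c ^ r⁻¹, ENNReal.rpow_pos_of_nonneg hc (inv_nonneg.2 hr.le), ?_⟩
  rwa [ENNReal.rpow_inv_rpow hr.ne', mul_comm]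

/-- Urysohn's lemma on `K`, applied to the images of `C₁` and `C₂` (disjoint because `φ` is
injective on `D`). -/
lemma exists_continuous_norm_indicator_sub_comp_le {X K : Type*} [TopologicalSpace X]
    [TopologicalSpace K] [CompactSpace K] [T2Space K] {φ : X → K} (hφ : Continuous φ)
    {D s C₁ C₂ : Set X} (hinj : InjOn φ D) (hC₁ : IsCompact C₁) (hC₂ : IsCompact C₂)
    (hC₁s : C₁ ⊆ s ∩ D) (hC₂s : C₂ ⊆ sᶜ ∩ D) (c : ℂ) :
    ∃ u : C(K, ℂ), ∀ x, ‖(s.indicator (fun _ => c) - u ∘ φ) x‖ ≤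
      ‖(C₁ ∪ C₂)ᶜ.indicator (fun _ => c) x‖ := by
  have hdisj : Disjoint (φ '' C₂) (φ '' C₁) := by
    rw [Set.disjoint_left]
    rintro _ ⟨x₂, hx₂, rfl⟩ ⟨x₁, hx₁, hφx⟩
    exact (hC₂s hx₂).1 (hinj (hC₁s hx₁).2 (hC₂s hx₂).2 hφx ▸ (hC₁s hx₁).1)
  obtain ⟨f, hf₂, hf₁, hf01⟩ :=
    exists_continuous_zero_one_of_isCompact (hC₂.image hφ) (hC₁.image hφ).isClosed hdisj
  refine ⟨⟨fun k => c * f k, by fun_prop⟩, fun x => ?_⟩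
  have hf1 : ‖(1 : ℂ) - f (φ x)‖ ≤ 1 := by
    rw [← Complex.ofReal_one, ← Complex.ofReal_sub, Complex.norm_real, Real.norm_eq_abs, abs_le]
    constructor <;> linarith [(hf01 (φ x)).1, (hf01 (φ x)).2]
  have hf0 : ‖(f (φ x) : ℂ)‖ ≤ 1 := by
    rw [Complex.norm_real, Real.norm_eq_abs, abs_le]
    constructor <;> linarith [(hf01 (φ x)).1, (hf01 (φ x)).2]
  by_cases hx₁ : x ∈ C₁
  · simp [(hC₁s hx₁).1, hf₁ (mem_image_of_mem φ hx₁)]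
  by_cases hx₂ : x ∈ C₂
  · simp [show x ∉ s from (hC₂s hx₂).1, hf₂ (mem_image_of_mem φ hx₂)]
  rw [indicator_of_mem (show x ∈ (C₁ ∪ C₂)ᶜ by simp [hx₁, hx₂])]
  by_cases hxs : x ∈ s
  · simpa [hxs, ← mul_one_sub] using mul_le_of_le_one_right (norm_nonneg c) hf1
  · simpa [hxs] using mul_le_of_le_one_right (norm_nonneg c) hf0

section Sufficiency

variable {X K : Type*} [MeasurableSpace X] {μ : Measure X} [TopologicalSpace K] [CompactSpace K]

lemma Dense.exists_eLpNorm_comp_sub_lt [IsFiniteMeasure μ] {S : Set C(K, ℂ)} (hS : Dense S)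
    (φ : X → K) (p : ℝ≥0∞) (u : C(K, ℂ)) {ε : ℝ≥0∞} (hε : 0 < ε) :
    ∃ q ∈ S, eLpNorm (u ∘ φ - q ∘ φ) p μ < ε := by
  obtain ⟨δ, hδ, hδε⟩ := ENNReal.exists_pos_mul_lt
    (ENNReal.rpow_ne_top_of_nonneg (inv_nonneg.2 ENNReal.toReal_nonneg) (measure_ne_top μ univ))
    hε.ne'
  obtain ⟨q, hqS, hq⟩ := EMetric.mem_closure_iff.1 (hS u) δ hδ
  refine ⟨q, hqS, lt_of_le_of_lt (eLpNorm_le_of_ae_enorm_bound (ae_of_all _ fun x => ?_)) hδε⟩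
  calc ‖(u ∘ φ - q ∘ φ) x‖ₑ = edist (u (φ x)) (q (φ x)) := (edist_eq_enorm_sub _ _).symm
    _ ≤ edist u q := by
      rw [edist_dist, edist_dist]
      exact ENNReal.ofReal_le_ofReal (ContinuousMap.dist_apply_le_dist _)
    _ ≤ δ := hq.le

variable [TopologicalSpace X]

lemma PaperRegular.exists_isCompact_diff_lt (hreg : PaperRegular μ) {s : Set X}
    (hs : MeasurableSet s) {ε : ℝ≥0∞} (hε : 0 < ε) :
    ∃ C ⊆ s, IsCompact C ∧ μ (s \ C) < ε := by
  obtain ⟨C, U, hC, -, hCs, hsU, hUC⟩ := hreg s hs ε hε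
  exact ⟨C, hCs, hC, (measure_mono (sdiff_subset_sdiff_left hsU)).trans_lt hUC⟩

variable [T2Space K]

lemma exists_eLpNorm_indicator_sub_comp_lt (hreg : PaperRegular μ) {φ : X → K}
    (hφ : Continuous φ) {D : Set X} (hD : MeasurableSet D) (hDnull : μ Dᶜ = 0)
    (hinj : InjOn φ D) {p : ℝ≥0∞} (hp0 : p ≠ 0) (hp : p ≠ ∞) (c : ℂ) {s : Set X}
    (hs : MeasurableSet s) {ε : ℝ≥0∞} (hε : 0 < ε) :
    ∃ u : C(K, ℂ), eLpNorm (s.indicator (fun _ => c) - u ∘ φ) p μ < ε := by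
  obtain ⟨δ, hδ, hδε⟩ := exists_pos_mul_rpow_lt (enorm_ne_top : ‖c‖ₑ ≠ ∞)
    (one_div_pos.2 (ENNReal.toReal_pos hp0 hp)) hε
  obtain ⟨C₁, hC₁s, hC₁, hμ₁⟩ :=
    hreg.exists_isCompact_diff_lt (hs.inter hD) (ENNReal.half_pos hδ.ne')
  obtain ⟨C₂, hC₂s, hC₂, hμ₂⟩ :=
    hreg.exists_isCompact_diff_lt (hs.compl.inter hD) (ENNReal.half_pos hδ.ne')
  have hsmall : μ (C₁ ∪ C₂)ᶜ < δ := by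
    have hcover : (C₁ ∪ C₂)ᶜ ⊆ Dᶜ ∪ ((s ∩ D) \ C₁ ∪ (sᶜ ∩ D) \ C₂) := by
      intro x hx
      simp only [mem_compl_iff, mem_union, mem_sdiff, mem_inter_iff] at hx ⊢
      tauto
    calc μ (C₁ ∪ C₂)ᶜ ≤ μ Dᶜ + (μ ((s ∩ D) \ C₁) + μ ((sᶜ ∩ D) \ C₂)) :=
          (measure_mono hcover).trans
            ((measure_union_le _ _).trans (add_le_add le_rfl (measure_union_le _ _)))
      _ < δ := by
          rw [hDnull, zero_add, ← ENNReal.add_halves δ]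
          exact ENNReal.add_lt_add hμ₁ hμ₂
  obtain ⟨u, hu⟩ := exists_continuous_norm_indicator_sub_comp_le hφ hinj hC₁ hC₂ hC₁s hC₂s c
  refine ⟨u, ?_⟩
  calc eLpNorm (s.indicator (fun _ => c) - u ∘ φ) p μ
      ≤ eLpNorm ((C₁ ∪ C₂)ᶜ.indicator (fun _ => c)) p μ := eLpNorm_mono hu
    _ ≤ ‖c‖ₑ * μ (C₁ ∪ C₂)ᶜ ^ (1 / p.toReal) := eLpNorm_indicator_const_le c p
    _ ≤ ‖c‖ₑ * δ ^ (1 / p.toReal) := by gcongr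
    _ < ε := hδε

variable [OpensMeasurableSpace X]

lemma exists_eLpNorm_sub_lt_of_injOn (hreg : PaperRegular μ) (φ : C(X, K)) {D : Set X}
    (hD : MeasurableSet D) (hDnull : μ Dᶜ = 0) (hinj : InjOn φ D) {p : ℝ≥0∞} (hp0 : p ≠ 0)
    (hp : p ≠ ∞) {F : Set (X → ℂ)} (hF_add : ∀ f ∈ F, ∀ g ∈ F, f + g ∈ F)
    (hF_meas : ∀ f ∈ F, Measurable f)
    (hF_approx : ∀ u : C(K, ℂ), ∀ ε > 0, ∃ f ∈ F, eLpNorm (u ∘ φ - f) p μ < ε)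
    {g : X → ℂ} (hg : MemLp g p μ) {ε : ℝ≥0∞} (hε : 0 < ε) :
    ∃ f ∈ F, eLpNorm (g - f) p μ < ε := by
  have hind (c : ℂ) {s : Set X} (hs : MeasurableSet s) (_ : μ s < ∞) {ε : ℝ≥0∞} (hε : ε ≠ 0) :
      ∃ f, eLpNorm (f - s.indicator fun _ => c) p μ ≤ ε ∧ f ∈ F := by
    obtain ⟨η, hη, hhalf⟩ := exists_Lp_half ℂ μ p hε
    obtain ⟨u, hu⟩ :=
      exists_eLpNorm_indicator_sub_comp_lt hreg φ.continuous hD hDnull hinj hp0 hp c hs hη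
    obtain ⟨f, hf, hfu⟩ := hF_approx u η hη
    have hsplit : f - s.indicator (fun _ => c) =
        -((s.indicator (fun _ => c) - u ∘ φ) + (u ∘ φ - f)) := by abel
    have hum : Measurable (u ∘ φ) := (u.continuous.comp φ.continuous).measurable
    refine ⟨f, ?_, hf⟩
    rw [hsplit, eLpNorm_neg]
    exact (hhalf _ _ ((measurable_const.indicator hs).sub hum).aestronglyMeasurable
      (hum.sub (hF_meas f hf)).aestronglyMeasurable hu.le hfu.le).le
  obtain ⟨ε', hε', hε'ε⟩ := exists_between hε
  obtain ⟨f, hgf, hf⟩ := hg.induction_dense hp (· ∈ F) hind (fun f g hf hg => hF_add f hf g hg)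
    (fun f hf => (hF_meas f hf).aestronglyMeasurable) hε'.ne'
  exact ⟨f, hf, hgf.trans_lt hε'ε⟩

end Sufficiency

lemma exists_isOpen_mem_disjoint_preimage {X : Type*} [TopologicalSpace X] [T2Space X]
    {τ : X → X} (hτ : Continuous τ) {x : X} (hx : τ x ≠ x) :
    ∃ V, IsOpen V ∧ x ∈ V ∧ Disjoint V (τ ⁻¹' V) := by
  obtain ⟨W₁, W₂, hW₁, hW₂, hxW₁, hτxW₂, hW⟩ := t2_separation hx.symm
  refine ⟨W₁ ∩ τ ⁻¹' W₂, hW₁.inter (hW₂.preimage hτ), ⟨hxW₁, hτxW₂⟩, ?_⟩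
  rw [disjoint_left]
  rintro z ⟨-, hz₂⟩ ⟨hz₁, -⟩
  exact disjoint_left.1 hW hz₁ hz₂

section Necessity

variable {X : Type*} [MeasurableSpace X] {μ ω : Measure X} {τ : X → X}

lemma exists_conull_disjoint_preimage_of_mutuallySingular (hτ : Measurable τ)
    (h : μ ⟂ₘ μ.map τ) : ∃ D, MeasurableSet D ∧ μ Dᶜ = 0 ∧ Disjoint D (τ ⁻¹' D) := by
  have hs := h.measurableSet_nullSet
  refine ⟨h.nullSetᶜ ∩ τ ⁻¹' h.nullSet, hs.compl.inter (hτ hs), ?_, ?_⟩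
  · rw [compl_inter, compl_compl, ← preimage_compl]
    refine measure_union_null h.measure_nullSet ?_
    rw [← Measure.map_apply hτ hs.compl]
    exact h.measure_compl_nullSet
  · rw [disjoint_left]
    rintro x ⟨-, hx⟩ ⟨hx', -⟩
    exact hx' hx

/-- On `E` the approximant is `L^p(ω)`-close to `1_E`, but by invariance its `L^p(ω)`-mass on
`E` is at most its `L^p(μ)`-mass on `τ⁻¹ E`, where `1_E` vanishes. -/
lemma measure_eq_zero_of_approx_by_invariant (hτ : Measurable τ) (hωμ : ω ≤ μ)
    (hωτ : ω ≤ μ.map τ) {p : ℝ≥0∞} (hp0 : p ≠ 0) (hp : p ≠ ∞) {E : Set X}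
    (hE : MeasurableSet E) (hEτ : Disjoint E (τ ⁻¹' E))
    (happrox : ∀ ε > 0, ∃ f : X → ℂ, Measurable f ∧ (∀ x, f (τ x) = f x) ∧
      eLpNorm (E.indicator (fun _ => 1) - f) p μ < ε) :
    ω E = 0 := by
  set g : X → ℂ := E.indicator fun _ => 1
  suffices hg : eLpNorm g p ω = 0 by
    rw [eLpNorm_indicator_const hE hp0 hp] at hg
    simpa [ENNReal.toReal_pos hp0 hp, ENNReal.toReal_nonneg.not_gt] using hg
  by_contra hg
  obtain ⟨η, hη, hhalf⟩ := exists_Lp_half ℂ ω p hg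
  obtain ⟨f, hf, hfτ, hgf⟩ := happrox η hη
  have h₁ : eLpNorm (E.indicator (g - f)) p ω ≤ η :=
    calc _ ≤ eLpNorm (g - f) p ω := eLpNorm_indicator_le _
      _ ≤ eLpNorm (g - f) p μ := eLpNorm_mono_measure _ hωμ
      _ ≤ η := hgf.le
  have h₂ : eLpNorm (E.indicator f) p ω ≤ η := by
    have hpt (x : X) : ‖(E.indicator f ∘ τ) x‖ ≤ ‖(g - f) x‖ := by
      by_cases hx : τ x ∈ E
      · have hxE : x ∉ E := fun h => disjoint_left.1 hEτ h hx
        simp [g, hx, hxE, hfτ]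
      · simp [hx]
    calc _ ≤ eLpNorm (E.indicator f) p (μ.map τ) := eLpNorm_mono_measure _ hωτ
      _ = eLpNorm (E.indicator f ∘ τ) p μ :=
          eLpNorm_map_measure (hf.indicator hE).aestronglyMeasurable hτ.aemeasurable
      _ ≤ eLpNorm (g - f) p μ := eLpNorm_mono hpt
      _ ≤ η := hgf.le
  have hsum : E.indicator (g - f) + E.indicator f = g := by
    rw [← indicator_add', sub_add_cancel, indicator_indicator, inter_self]
  have hlt := hhalf _ _ (((measurable_const.indicator hE).sub hf).indicator hE).aestronglyMeasurable
    (hf.indicator hE).aestronglyMeasurable h₁ h₂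
  rw [hsum] at hlt
  exact lt_irrefl _ hlt

variable [TopologicalSpace X]

lemma PaperRegular.exists_isCompact_measure_ne_zero (hreg : PaperRegular μ) (hωμ : ω ≤ μ)
    (hω : ω ≠ 0) : ∃ C, IsCompact C ∧ ω C ≠ 0 := by
  have hωuniv : ω univ ≠ 0 := Measure.measure_univ_ne_zero.2 hω
  obtain ⟨C, U, hC, -, -, hU, hUC⟩ :=
    hreg univ MeasurableSet.univ (ω univ) (pos_iff_ne_zero.2 hωuniv)
  refine ⟨C, hC, fun hωC => ?_⟩
  have hωCc : ω Cᶜ < ω univ :=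
    calc ω Cᶜ ≤ μ Cᶜ := hωμ _
      _ ≤ μ (U \ C) := measure_mono fun x hx => ⟨hU trivial, hx⟩
      _ < ω univ := hUC
  have hsplit := measure_univ_le_add_compl (μ := ω) C
  rw [hωC, zero_add] at hsplit
  exact lt_irrefl _ (hsplit.trans_lt hωCc)

variable [T2Space X]

lemma IsCompact.exists_isOpen_disjoint_preimage_measure_ne_zero (hτ : Continuous τ)
    (hfix : ∀ x, τ x ≠ x) {C : Set X} (hC : IsCompact C) (hωC : ω C ≠ 0) :
    ∃ V, IsOpen V ∧ Disjoint V (τ ⁻¹' V) ∧ ω V ≠ 0 := by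
  by_contra! h
  refine hωC (hC.measure_zero_of_nhdsWithin fun x _ => ?_)
  obtain ⟨V, hV, hxV, hVτ⟩ := exists_isOpen_mem_disjoint_preimage hτ (hfix x)
  exact ⟨V, mem_nhdsWithin_of_mem_nhds (hV.mem_nhds hxV), h V hV hVτ⟩

end Necessity

lemma concOnTransversal_of_mutuallySingular {Γ : Type*} [CommGroup Γ] [TopologicalSpace Γ]
    [MeasurableSpace Γ] [MeasurableMul Γ] {Λ : Subgroup Γ} (hΛ : (Λ : Set Γ).Countable)
    {μ : Measure Γ} (h : ∀ l ∈ Λ, l ≠ 1 → μ ⟂ₘ μ.map (l * ·)) :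
    ConcOnTransversal Λ μ := by
  have key (l : Γ) (hl : l ∈ Λ) (hl1 : l ≠ 1) :=
    exists_conull_disjoint_preimage_of_mutuallySingular (measurable_const_mul l) (h l hl hl1)
  choose! D hD hDnull hDτ using key
  set S := (Λ : Set Γ) \ {1}
  have hS : S.Countable := hΛ.mono sdiff_subset
  refine ⟨⋂ l ∈ S, D l, .biInter hS fun l hl => hD l hl.1 hl.2, ?_, fun l hl hl1 => ?_⟩
  · rw [compl_iInter₂, measure_biUnion_null_iff hS]
    exact fun l hl => hDnull l hl.1 hl.2
  · rw [eq_empty_iff_forall_notMem]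
    rintro _ ⟨hxD, y, hyD, rfl⟩
    have hlS : l ∈ S := ⟨hl, hl1⟩
    exact disjoint_left.1 (hDτ l hl hl1) (biInter_subset_of_mem hlS hyD)
      (biInter_subset_of_mem hlS hxD)

section DualGroup

variable {G : Type*} [CommGroup G] [TopologicalSpace G] {H : Subgroup G}

lemma injOn_restrictDual {D : Set (PontryaginDual G)}
    (hD : ∀ l ∈ annihilator H, l ≠ 1 → D ∩ (fun t => l * t) '' D = ∅) :
    InjOn (restrictDual H) D := by
  intro γ₁ h₁ γ₂ h₂ heq
  by_contra hne
  have hl : γ₁ * γ₂⁻¹ ∈ annihilator H := fun y hy => by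
    have hy' : γ₁ y = γ₂ y := congrFun heq ⟨y, hy⟩
    change γ₁ y * (γ₂ y)⁻¹ = 1
    rw [hy', mul_inv_cancel]
  exact (eq_empty_iff_forall_notMem.1 (hD _ hl (mul_inv_eq_one.not.2 hne))) γ₁
    ⟨h₁, γ₂, h₂, inv_mul_cancel_right γ₁ γ₂⟩

variable [MeasurableSpace (PontryaginDual G)] [BorelSpace (PontryaginDual G)]
  {μ : Measure (PontryaginDual G)} [IsFiniteMeasure μ] {α : ℝ}

lemma denseInLp_trigPoly_of_concOnTransversal (hreg : PaperRegular μ) (hα : 0 < α)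
    (h : ConcOnTransversal (annihilator H) μ) : DenseInLp μ α (trigPoly H) := by
  obtain ⟨D, hD, hDnull, htrans⟩ := h
  rw [denseInLp_iff_eLpNorm hα]
  intro g hg hgfin ε hε
  refine exists_eLpNorm_sub_lt_of_injOn hreg (restrictDual H) hD hDnull
    (injOn_restrictDual htrans) (by simpa using hα) ENNReal.ofReal_ne_top
    (fun _ hf _ hf' => add_mem_trigPoly hf hf')
    (fun _ hf => (continuous_of_mem_trigPoly hf).measurable) (fun u ε hε => ?_)
    ⟨hg.aestronglyMeasurable, hgfin⟩ hε
  obtain ⟨q, hq, hlt⟩ :=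
    (dense_trigPolyPullback H).exists_eLpNorm_comp_sub_lt (μ := μ) (restrictDual H) _ u hε
  exact ⟨q ∘ restrictDual H, hq, hlt⟩

lemma mutuallySingular_map_mul_left_of_denseInLp (hreg : PaperRegular μ) (hα : 0 < α)
    (hdense : DenseInLp μ α (trigPoly H)) {l : PontryaginDual G} (hl : l ∈ annihilator H)
    (hl1 : l ≠ 1) : μ ⟂ₘ μ.map (l * ·) := by
  have hτ : Continuous (l * ·) := continuous_const_mul l
  rw [Measure.mutuallySingular_iff_disjoint, disjoint_iff]
  by_contra hω
  obtain ⟨C, hC, hωC⟩ := hreg.exists_isCompact_measure_ne_zero inf_le_left hω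
  obtain ⟨V, hV, hVτ, hωV⟩ := hC.exists_isOpen_disjoint_preimage_measure_ne_zero hτ
    (fun _ h => hl1 (mul_eq_right.1 h)) hωC
  refine hωV (measure_eq_zero_of_approx_by_invariant hτ.measurable inf_le_left inf_le_right
    (by simpa using hα) ENNReal.ofReal_ne_top hV.measurableSet hVτ fun ε hε => ?_)
  have hfin := (memLp_indicator_const (ENNReal.ofReal α) hV.measurableSet (1 : ℂ)
    (Or.inr (measure_ne_top μ V))).eLpNorm_lt_top
  obtain ⟨f, hf, hfε⟩ := (denseInLp_iff_eLpNorm hα).1 hdense _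
    (measurable_const.indicator hV.measurableSet) hfin ε hε
  exact ⟨f, (continuous_of_mem_trigPoly hf).measurable, apply_mul_of_mem_trigPoly hf hl, hfε⟩

end DualGroup

theorem dense_iff_transversal_countable_general
    (H : Subgroup G)
    (hcount : (annihilator H : Set (PontryaginDual G)).Countable)
    [MeasurableSpace (PontryaginDual G)] [BorelSpace (PontryaginDual G)]
    (μ : Measure (PontryaginDual G)) [IsFiniteMeasure μ] (hreg : PaperRegular μ)
    (α : ℝ) (hα : 0 < α) :
    DenseInLp μ α (trigPoly H) ↔ ConcOnTransversal (annihilator H) μ :=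
  ⟨fun hdense => concOnTransversal_of_mutuallySingular hcount fun _ hl hl1 =>
      mutuallySingular_map_mul_left_of_denseInLp hreg hα hdense hl hl1,
    denseInLp_trigPoly_of_concOnTransversal hreg hα⟩

/-- Theorem 4.5: if the annihilator Λ of H is countable, μ is a regular
finite Borel measure on the dual group Γ of G and α ∈ (0,∞), then the trigonometric
H-polynomials are dense in L^α(μ) if and only if μ is concentrated on a transversal. -/
theorem dense_iff_transversal_countable
    (H : Subgroup G) (hH : IsClosed (H : Set G))
    (hcount : (annihilator H : Set (PontryaginDual G)).Countable)
    [MeasurableSpace (PontryaginDual G)] [BorelSpace (PontryaginDual G)]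
    (μ : Measure (PontryaginDual G)) [IsFiniteMeasure μ] (hreg : PaperRegular μ)
    (α : ℝ) (hα : 0 < α) :
    DenseInLp μ α (trigPoly H) ↔ ConcOnTransversal (annihilator H) μ :=
  dense_iff_transversal_countable_general H hcount μ hreg α hα
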